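/- Consistency of the doubly robust functional under nuisance convergence: suppose sequences of functions g_n : 𝒳 → ℝ, e_n : 𝒳 → [δ, 1], p_n : 𝒳 → [δ, 1 − δ] converge pointwise on the (finite) support of X to limits g*, e*, p*, and that either (i) g*(x) = E[Y | X = x, A = a, R = true] for all x in the support of X, or (ii) p*(x) = ℙ(R = true | X = x) and e*(x) = ℙ(A = a | X = x, R = true) for all x in the support of X. Then Φ(g_n, e_n, p_n) → ψ as n → ∞, where ψ := Σ_x ℙ(X = x | R = false)·E[Y | X = x, A = a, R = true] and Φ(g, e, p) := (1/ℙ(R = false))·E[ ((1 − p(X))·1{R = true, A = a}/(e(X)·p(X)))·(Y − g(X)) + 1{R = false}·g(X) ]. -/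

import Mathlib

open Finset

attribute [local instance] Classical.propDecidable

variable {Ω : Type*}

/-- Probability of an event. -/
noncomputable def pr [Fintype Ω] (P : Ω → ℝ) (E : Ω → Prop) : ℝ :=
  ∑ ω, if E ω then P ω else 0

/-- Expectation of a real random variable. -/
noncomputable def ex [Fintype Ω] (P : Ω → ℝ) (Z : Ω → ℝ) : ℝ :=
  ∑ ω, P ω * Z ω

/-- Conditional probability ℙ(F | E) = ℙ(F ∩ E)/ℙ(E). -/
noncomputable def cpr [Fintype Ω] (P : Ω → ℝ) (F E : Ω → Prop) : ℝ :=
  pr P (fun ω => F ω ∧ E ω) / pr P E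

/-- Conditional expectation E[Z | E] = E[Z·1_E]/ℙ(E). -/
noncomputable def cex [Fintype Ω] (P : Ω → ℝ) (Z : Ω → ℝ) (E : Ω → Prop) : ℝ :=
  (∑ ω, if E ω then P ω * Z ω else 0) / pr P E

open Filter Topology

/-!
The doubly robust functional is a finite sum of expressions that are continuous in the values of
`(g, e, p)` at the points of the support of `X`, with denominators bounded below by `δ²`; hence
`Φ(gₙ, eₙ, pₙ) → Φ(g*, e*, p*)`. On the fibre `X = x` the limit contributes
`w x · ℙ(X = x, A = a, R) · (μ x - g* x) + ℙ(X = x, ¬R) · g* x`, where `w = (1 - p*) / (e* p*)`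
and `μ x = E[Y | X = x, A = a, R]`. This equals `ℙ(X = x, ¬R) · μ x` in both cases: if `g* = μ`
the first term vanishes, and if `p*`, `e*` are the true propensities then
`w x · ℙ(X = x, A = a, R) = ℙ(X = x, ¬R)`.
-/

section Probability

variable [Fintype Ω] {P : Ω → ℝ}

lemma pr_congr {E F : Ω → Prop} (h : ∀ ω, E ω ↔ F ω) : pr P E = pr P F := by
  rw [funext fun ω => propext (h ω)]

lemma pr_nonneg (hP0 : ∀ ω, 0 ≤ P ω) (E : Ω → Prop) : 0 ≤ pr P E :=
  sum_nonneg fun ω _ => by split_ifs <;> simp [hP0 ω]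

lemma pr_mono (hP0 : ∀ ω, 0 ≤ P ω) {E F : Ω → Prop} (h : ∀ ω, E ω → F ω) :
    pr P E ≤ pr P F :=
  sum_le_sum fun ω _ => by
    by_cases hE : E ω
    · simp [hE, h ω hE]
    · simpa [hE] using by split_ifs <;> simp [hP0 ω]

lemma eq_zero_of_pr_eq_zero (hP0 : ∀ ω, 0 ≤ P ω) {E : Ω → Prop} (h : pr P E = 0) {ω : Ω}
    (hE : E ω) : P ω = 0 := by
  have := (sum_eq_zero_iff_of_nonneg fun i _ => by split_ifs <;> simp [hP0 i]).1 h ω (mem_univ ω)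
  simpa [hE] using this

lemma pr_pos_of_mem (hP0 : ∀ ω, 0 ≤ P ω) {E : Ω → Prop} {ω : Ω} (hω : P ω ≠ 0) (hE : E ω) :
    0 < pr P E :=
  (pr_nonneg hP0 E).lt_of_ne' fun h => hω (eq_zero_of_pr_eq_zero hP0 h hE)

lemma pr_and_add_pr_and_not (E F : Ω → Prop) :
    pr P (fun ω => E ω ∧ F ω) + pr P (fun ω => E ω ∧ ¬F ω) = pr P E := by
  rw [pr, pr, pr, ← sum_add_distrib]
  refine sum_congr rfl fun ω _ => ?_
  by_cases hE : E ω <;> by_cases hF : F ω <;> simp [hE, hF]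

lemma cex_mul_pr (hP0 : ∀ ω, 0 ≤ P ω) (Z : Ω → ℝ) (E : Ω → Prop) :
    cex P Z E * pr P E = ∑ ω, if E ω then P ω * Z ω else 0 := by
  by_cases h : pr P E = 0
  · rw [h, mul_zero]
    refine (sum_eq_zero fun ω _ => ?_).symm
    split_ifs with hE
    · rw [eq_zero_of_pr_eq_zero hP0 h hE, zero_mul]
    · rfl
  · exact div_mul_cancel₀ _ h

lemma ex_eq_sum_fiber {𝒳 : Type*} [Fintype 𝒳] (X : Ω → 𝒳) (Z : Ω → ℝ) :
    ex P Z = ∑ x, ∑ ω, if X ω = x then P ω * Z ω else 0 := by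
  rw [sum_comm]
  simp [ex]

lemma tendsto_ex {Z : ℕ → Ω → ℝ} {Z' : Ω → ℝ}
    (hZ : ∀ ω, P ω ≠ 0 → Tendsto (fun n => Z n ω) atTop (𝓝 (Z' ω))) :
    Tendsto (fun n => ex P (Z n)) atTop (𝓝 (ex P Z')) := by
  refine tendsto_finsetSum _ fun ω _ => ?_
  by_cases hω : P ω = 0
  · simp only [hω, zero_mul, tendsto_const_nhds]
  · exact (hZ ω hω).const_mul _

lemma one_sub_cpr_div_mul_pr (hP0 : ∀ ω, 0 ≤ P ω) {E F G : Ω → Prop} (hE : 0 < pr P E)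
    (hGEF : 0 < pr P (fun ω => G ω ∧ E ω ∧ F ω)) :
    (1 - cpr P F E) / (cpr P G (fun ω => E ω ∧ F ω) * cpr P F E)
        * pr P (fun ω => G ω ∧ E ω ∧ F ω) = pr P (fun ω => E ω ∧ ¬F ω) := by
  have hEF : 0 < pr P (fun ω => E ω ∧ F ω) := hGEF.trans_le (pr_mono hP0 fun ω h => h.2)
  have hsplit := pr_and_add_pr_and_not (P := P) E F
  rw [cpr, cpr, pr_congr (P := P) (E := fun ω => F ω ∧ E ω) (F := fun ω => E ω ∧ F ω) fun ω => and_comm]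
  field_simp
  linarith

end Probability

section DoublyRobust

variable {𝒳 𝒯 : Type*} (X : Ω → 𝒳) (A : Ω → 𝒯) (Y : Ω → ℝ) (R : Ω → Bool) (a : 𝒯)

noncomputable def drScore (g e p : 𝒳 → ℝ) (ω : Ω) : ℝ :=
  ((1 - p (X ω)) * (if R ω = true ∧ A ω = a then (1 : ℝ) else 0) / (e (X ω) * p (X ω)))
      * (Y ω - g (X ω))
    + (if R ω = false then (1 : ℝ) else 0) * g (X ω)

lemma tendsto_drScore {g e p : ℕ → 𝒳 → ℝ} {g' e' p' : 𝒳 → ℝ} {ω : Ω}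
    (hg : Tendsto (fun n => g n (X ω)) atTop (𝓝 (g' (X ω))))
    (he : Tendsto (fun n => e n (X ω)) atTop (𝓝 (e' (X ω))))
    (hp : Tendsto (fun n => p n (X ω)) atTop (𝓝 (p' (X ω))))
    (hden : e' (X ω) * p' (X ω) ≠ 0) :
    Tendsto (fun n => drScore X A Y R a (g n) (e n) (p n) ω) atTop
      (𝓝 (drScore X A Y R a g' e' p' ω)) :=
  ((((tendsto_const_nhds.sub hp).mul tendsto_const_nhds).div (he.mul hp) hden).mul
    (tendsto_const_nhds.sub hg)).add (hg.const_mul _)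

variable [Fintype Ω] {P : Ω → ℝ}

lemma sum_fiber_drScore (hP0 : ∀ ω, 0 ≤ P ω) (g e p : 𝒳 → ℝ) (x : 𝒳) :
    (∑ ω, if X ω = x then P ω * drScore X A Y R a g e p ω else 0)
      = (1 - p x) / (e x * p x) * pr P (fun ω => A ω = a ∧ X ω = x ∧ R ω = true)
          * (cex P Y (fun ω => X ω = x ∧ A ω = a ∧ R ω = true) - g x)
        + pr P (fun ω => X ω = x ∧ R ω = false) * g x := by
  rw [pr_congr (P := P) (F := fun ω => X ω = x ∧ A ω = a ∧ R ω = true) fun ω => by tauto,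
    mul_assoc, mul_sub, mul_comm (pr P _) (cex P Y _), cex_mul_pr hP0]
  simp only [pr, mul_sum, sum_mul, ← sum_sub_distrib, ← sum_add_distrib]
  refine sum_congr rfl fun ω _ => ?_
  by_cases hX : X ω = x
  · subst hX
    rcases Bool.eq_false_or_eq_true (R ω) with hR | hR <;> by_cases hA : A ω = a <;>
      simp [drScore, hR, hA]
    ring
  · simp [hX]

lemma sum_fiber_drScore_eq_of_doubly_robust (hP0 : ∀ ω, 0 ≤ P ω) {g e p : 𝒳 → ℝ} {x : 𝒳}
    (hpos : 0 < pr P (fun ω => X ω = x) → 0 < pr P (fun ω => A ω = a ∧ X ω = x ∧ R ω = true))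
    (hdr : 0 < pr P (fun ω => X ω = x) →
      g x = cex P Y (fun ω => X ω = x ∧ A ω = a ∧ R ω = true)
      ∨ p x = cpr P (fun ω => R ω = true) (fun ω => X ω = x)
        ∧ e x = cpr P (fun ω => A ω = a) (fun ω => X ω = x ∧ R ω = true)) :
    (∑ ω, if X ω = x then P ω * drScore X A Y R a g e p ω else 0)
      = pr P (fun ω => X ω = x ∧ R ω = false)
          * cex P Y (fun ω => X ω = x ∧ A ω = a ∧ R ω = true) := by
  rw [sum_fiber_drScore X A Y R a hP0]
  by_cases hx : 0 < pr P (fun ω => X ω = x)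
  · rcases hdr hx with hg | ⟨hp, he⟩
    · rw [hg]; ring
    · rw [hp, he, one_sub_cpr_div_mul_pr hP0 hx (hpos hx),
        pr_congr (P := P) (F := fun ω => X ω = x ∧ R ω = false) fun ω => by simp]
      ring
  · have hx0 : pr P (fun ω => X ω = x) = 0 := (not_lt.1 hx).antisymm (pr_nonneg hP0 _)
    have hnull : ∀ {E : Ω → Prop}, (∀ ω, E ω → X ω = x) → pr P E = 0 := fun hE =>
      ((pr_mono hP0 hE).trans hx0.le).antisymm (pr_nonneg hP0 _)
    rw [hnull fun ω h => h.2.1, hnull fun ω h => h.1]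
    ring

end DoublyRobust

theorem doubly_robust_consistency_general
    {𝒳 𝒯 : Type*} [Fintype Ω] [Fintype 𝒳]
    (P : Ω → ℝ) (hP0 : ∀ ω, 0 ≤ P ω)
    (X : Ω → 𝒳) (A : Ω → 𝒯) (Y : Ω → ℝ) (R : Ω → Bool) (a : 𝒯)
    (δ : ℝ) (hδ0 : 0 < δ)
    -- positivity
    (hpos : ∀ x, 0 < pr P (fun ω => X ω = x) →
      0 < pr P (fun ω => A ω = a ∧ X ω = x ∧ R ω = true))
    -- sequences of nuisance functions and their ranges
    (g : ℕ → 𝒳 → ℝ) (e : ℕ → 𝒳 → ℝ) (p : ℕ → 𝒳 → ℝ)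
    (he_rng : ∀ n x, δ ≤ e n x ∧ e n x ≤ 1)
    (hp_rng : ∀ n x, δ ≤ p n x ∧ p n x ≤ 1 - δ)
    -- pointwise convergence on the support of X
    (gstar estar pstar : 𝒳 → ℝ)
    (hgconv : ∀ x, 0 < pr P (fun ω => X ω = x) →
      Tendsto (fun n => g n x) atTop (𝓝 (gstar x)))
    (heconv : ∀ x, 0 < pr P (fun ω => X ω = x) →
      Tendsto (fun n => e n x) atTop (𝓝 (estar x)))
    (hpconv : ∀ x, 0 < pr P (fun ω => X ω = x) →
      Tendsto (fun n => p n x) atTop (𝓝 (pstar x)))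
    -- one of the two limits is correctly specified
    (hdr :
      (∀ x, 0 < pr P (fun ω => X ω = x) →
        gstar x = cex P Y (fun ω => X ω = x ∧ A ω = a ∧ R ω = true))
      ∨ ((∀ x, 0 < pr P (fun ω => X ω = x) →
            pstar x = cpr P (fun ω => R ω = true) (fun ω => X ω = x))
          ∧ (∀ x, 0 < pr P (fun ω => X ω = x) →
            estar x = cpr P (fun ω => A ω = a) (fun ω => X ω = x ∧ R ω = true)))) :
    Tendsto
      (fun n =>
        (pr P (fun ω => R ω = false))⁻¹
          * ex P (fun ω =>
              ((1 - p n (X ω)) * (if R ω = true ∧ A ω = a then (1 : ℝ) else 0)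
                  / (e n (X ω) * p n (X ω)))
                * (Y ω - g n (X ω))
              + (if R ω = false then (1 : ℝ) else 0) * g n (X ω)))
      atTop
      (𝓝 (∑ x, cpr P (fun ω => X ω = x) (fun ω => R ω = false)
            * cex P Y (fun ω => X ω = x ∧ A ω = a ∧ R ω = true))) := by
  have hsupp : ∀ ω, P ω ≠ 0 → 0 < pr P (fun ω' => X ω' = X ω) := fun ω hω =>
    pr_pos_of_mem hP0 hω rfl
  have hlim : Tendsto (fun n => ex P (drScore X A Y R a (g n) (e n) (p n))) atTop
      (𝓝 (ex P (drScore X A Y R a gstar estar pstar))) := by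
    refine tendsto_ex fun ω hω => ?_
    have he := heconv _ (hsupp ω hω)
    have hp := hpconv _ (hsupp ω hω)
    have he_pos := hδ0.trans_le (ge_of_tendsto' he fun n => (he_rng n (X ω)).1)
    have hp_pos := hδ0.trans_le (ge_of_tendsto' hp fun n => (hp_rng n (X ω)).1)
    exact tendsto_drScore X A Y R a (hgconv _ (hsupp ω hω)) he hp (mul_pos he_pos hp_pos).ne'
  have hfiber : ∀ x, (∑ ω, if X ω = x then P ω * drScore X A Y R a gstar estar pstar ω else 0)
      = pr P (fun ω => X ω = x ∧ R ω = false)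
          * cex P Y (fun ω => X ω = x ∧ A ω = a ∧ R ω = true) := fun x =>
    sum_fiber_drScore_eq_of_doubly_robust X A Y R a hP0 (hpos x) fun hx =>
      hdr.imp (· x hx) fun h => ⟨h.1 x hx, h.2 x hx⟩
  have hψ : ∑ x, cpr P (fun ω => X ω = x) (fun ω => R ω = false)
        * cex P Y (fun ω => X ω = x ∧ A ω = a ∧ R ω = true)
      = (pr P (fun ω => R ω = false))⁻¹ * ex P (drScore X A Y R a gstar estar pstar) := by
    rw [ex_eq_sum_fiber X, mul_sum]
    refine sum_congr rfl fun x _ => ?_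
    rw [hfiber, cpr]
    ring
  rw [hψ]
  exact hlim.const_mul _

/-- Consistency of the doubly robust functional under pointwise
convergence of the nuisance functions, when one of the two limits is correctly
specified. -/
theorem doubly_robust_consistency
    {𝒳 𝒯 : Type*} [Fintype Ω] [Fintype 𝒳] [Fintype 𝒯]
    (P : Ω → ℝ) (hP0 : ∀ ω, 0 ≤ P ω) (hP1 : ∑ ω, P ω = 1)
    (X : Ω → 𝒳) (A : Ω → 𝒯) (Y : Ω → ℝ) (R : Ω → Bool) (a : 𝒯)
    (δ : ℝ) (hδ0 : 0 < δ) (hδhalf : δ ≤ 1 / 2)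
    -- positivity
    (hposT : 0 < pr P (fun ω => R ω = false))
    (hpos : ∀ x, 0 < pr P (fun ω => X ω = x) →
      0 < pr P (fun ω => A ω = a ∧ X ω = x ∧ R ω = true))
    -- sequences of nuisance functions and their ranges
    (g : ℕ → 𝒳 → ℝ) (e : ℕ → 𝒳 → ℝ) (p : ℕ → 𝒳 → ℝ)
    (he_rng : ∀ n x, δ ≤ e n x ∧ e n x ≤ 1)
    (hp_rng : ∀ n x, δ ≤ p n x ∧ p n x ≤ 1 - δ)
    -- pointwise convergence on the support of X
    (gstar estar pstar : 𝒳 → ℝ)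
    (hgconv : ∀ x, 0 < pr P (fun ω => X ω = x) →
      Tendsto (fun n => g n x) atTop (𝓝 (gstar x)))
    (heconv : ∀ x, 0 < pr P (fun ω => X ω = x) →
      Tendsto (fun n => e n x) atTop (𝓝 (estar x)))
    (hpconv : ∀ x, 0 < pr P (fun ω => X ω = x) →
      Tendsto (fun n => p n x) atTop (𝓝 (pstar x)))
    -- one of the two limits is correctly specified
    (hdr :
      (∀ x, 0 < pr P (fun ω => X ω = x) →
        gstar x = cex P Y (fun ω => X ω = x ∧ A ω = a ∧ R ω = true))
      ∨ ((∀ x, 0 < pr P (fun ω => X ω = x) →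
            pstar x = cpr P (fun ω => R ω = true) (fun ω => X ω = x))
          ∧ (∀ x, 0 < pr P (fun ω => X ω = x) →
            estar x = cpr P (fun ω => A ω = a) (fun ω => X ω = x ∧ R ω = true)))) :
    Tendsto
      (fun n =>
        (pr P (fun ω => R ω = false))⁻¹
          * ex P (fun ω =>
              ((1 - p n (X ω)) * (if R ω = true ∧ A ω = a then (1 : ℝ) else 0)
                  / (e n (X ω) * p n (X ω)))
                * (Y ω - g n (X ω))
              + (if R ω = false then (1 : ℝ) else 0) * g n (X ω)))
      atTop
      (𝓝 (∑ x, cpr P (fun ω => X ω = x) (fun ω => R ω = false)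
            * cex P Y (fun ω => X ω = x ∧ A ω = a ∧ R ω = true))) :=
  doubly_robust_consistency_general P hP0 X A Y R a δ hδ0 hpos g e p he_rng hp_rng gstar estar pstar
    hgconv heconv hpconv hdr
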